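/- The rotated teleportation pattern implements a Z-rotation: for any |ψ⟩ ∈ ℂ², α ∈ ℝ, and outcome s ∈ {0,1}, (⟨(−1)^s _α| ⊗ I) ∘ ΛZ (|ψ⟩ ⊗ |+⟩) = (1/√2) X^s H R_z(−α) |ψ⟩, where ⟨(−1)^s_α| denotes projection of the first qubit onto |+_α⟩ (s=0) or |−_α⟩ (s=1). -/

import Mathlib

open Matrix

/-- The controlled-Z gate `diag(1,1,1,-1)` on `ℂ²⊗ℂ²`. -/
def CZ : Matrix (Fin 2 × Fin 2) (Fin 2 × Fin 2) ℂ :=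
  Matrix.of fun a b => if a = b then (if a = (1, 1) then -1 else 1) else 0

/-- The Hadamard gate. -/
noncomputable def Had : Matrix (Fin 2) (Fin 2) ℂ :=
  (1 / (Real.sqrt 2 : ℂ)) • !![1, 1; 1, -1]

def PauliX : Matrix (Fin 2) (Fin 2) ℂ := !![0, 1; 1, 0]
def Xpow (s : Bool) : Matrix (Fin 2) (Fin 2) ℂ := if s then PauliX else 1

/-- The Z-rotation `R_z(α) = diag(1, e^{iα})`. -/
noncomputable def Rz (α : ℝ) : Matrix (Fin 2) (Fin 2) ℂ :=
  !![1, 0; 0, Complex.exp ((α : ℂ) * Complex.I)]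

/-- `|±_α⟩`; `s = false` is `+`, `s = true` is `−`. -/
noncomputable def ketPM (s : Bool) (α : ℝ) : Fin 2 → ℂ :=
  ![1 / Real.sqrt 2,
    (if s then -1 else 1) * Complex.exp ((α : ℂ) * Complex.I) / Real.sqrt 2]

/-- `|+⟩ = |+_0⟩`. -/
noncomputable def ketP : Fin 2 → ℂ := ![1 / Real.sqrt 2, 1 / Real.sqrt 2]

/-! For each `j`, the slice `i ↦ ΛZ (ψ ⊗ |+⟩) (i, j)` is `ψ / √2` with the phase `(-1)^j` on
`ψ 1`, so projecting the first qubit onto `|±_α⟩` yields `⟨±_α|ψ⟩ / √2`, with the sign flipped when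
`j = 1`. The rows of `H R_z(-α)` are exactly `⟨+_α|` and `⟨-_α|`, and `X^s` swaps them. -/

lemma CZ_mulVec_apply (v : Fin 2 × Fin 2 → ℂ) (i j : Fin 2) :
    (CZ *ᵥ v) (i, j) = (if i = 1 ∧ j = 1 then -1 else 1) * v (i, j) := by
  rw [mulVec, dotProduct, Finset.sum_eq_single (i, j)]
  · simp [CZ, Prod.ext_iff]
  · intro b _ hb
    simp [CZ, Ne.symm hb]
  · simp

lemma conj_exp_ofReal_mul_I (α : ℝ) :
    starRingEnd ℂ (Complex.exp (α * Complex.I)) = Complex.exp (-(α * Complex.I)) := by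
  rw [← Complex.exp_conj, map_mul, Complex.conj_ofReal, Complex.conj_I, mul_neg]

lemma Xpow_mulVec_apply (s : Bool) (v : Fin 2 → ℂ) (j : Fin 2) :
    (Xpow s *ᵥ v) j = v (if s then j.rev else j) := by
  cases s <;> fin_cases j <;> simp [Xpow, PauliX, mulVec, dotProduct, Fin.sum_univ_two, one_apply]

lemma Had_mulVec_Rz_neg_mulVec_apply (α : ℝ) (ψ : Fin 2 → ℂ) (j : Fin 2) :
    (Had *ᵥ Rz (-α) *ᵥ ψ) j = star (ketPM (decide (j = 1)) α) ⬝ᵥ ψ := by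
  fin_cases j <;>
    simp [Had, Rz, ketPM, mulVec, dotProduct, Fin.sum_univ_two, conj_exp_ofReal_mul_I] <;> ring

lemma proj_ketPM_CZ_mulVec_ketP_apply (ψ : Fin 2 → ℂ) (α : ℝ) (s : Bool) (j : Fin 2) :
    ∑ i, star (ketPM s α i) * (CZ *ᵥ fun p => ψ p.1 * ketP p.2) (i, j) =
      (1 / (Real.sqrt 2 : ℂ)) * (star (ketPM (s ^^ decide (j = 1)) α) ⬝ᵥ ψ) := by
  simp only [CZ_mulVec_apply, Fin.sum_univ_two, dotProduct]
  cases s <;> fin_cases j <;> simp [ketPM, ketP, star_div₀] <;> ring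

/-- The rotated teleportation pattern implements a Z-rotation. -/
theorem teleportation_rotation (ψ : Fin 2 → ℂ) (α : ℝ) (s : Bool) :
    (fun j => ∑ i, star (ketPM s α i) *
        (CZ.mulVec fun p => ψ p.1 * ketP p.2) (i, j)) =
      (1 / (Real.sqrt 2 : ℂ)) • (Xpow s).mulVec (Had.mulVec ((Rz (-α)).mulVec ψ)) := by
  funext j
  rw [proj_ketPM_CZ_mulVec_ketP_apply, Pi.smul_apply, smul_eq_mul, Xpow_mulVec_apply,
    Had_mulVec_Rz_neg_mulVec_apply]
  cases s <;> fin_cases j <;> rfl
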